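/- For all n ≥ 4 and all k, the number of partitions of the vertex set of the n-cycle C_n into k non-empty independent sets satisfies S(C_n, k) = S(n-1, k-1) - S(C_{n-1}, k), with S(C_3, 3) = 1 and S(C_3, k) = 0 for k ≠ 3. -/

import Mathlib

open Finset SimpleGraph Polynomial

/-- Stirling numbers of the second kind. -/
def stirling2 : ℕ → ℕ → ℕ
  | 0, 0 => 1
  | 0, _ + 1 => 0
  | _ + 1, 0 => 0
  | n + 1, k + 1 => (k + 1) * stirling2 n (k + 1) + stirling2 n k

/-- Bell numbers. -/
def bell (n : ℕ) : ℕ := ∑ k ∈ Finset.range (n + 1), stirling2 n k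

/-- `graphStirling G k` is the number of partitions of the vertex set of `G`
into exactly `k` non-empty independent sets. -/
noncomputable def graphStirling {V : Type} [Fintype V] [DecidableEq V] (G : SimpleGraph V) (k : ℕ) : ℕ :=
  Nat.card {P : Finpartition (Finset.univ : Finset V) //
    P.parts.card = k ∧ ∀ p ∈ P.parts, ∀ u ∈ p, ∀ v ∈ p, ¬ G.Adj u v}

/-- The number of proper colorings of `G` with `x` colors
(the chromatic polynomial evaluated at `x`). -/
noncomputable def chromaticCount {V : Type} [Fintype V] (G : SimpleGraph V) (x : ℕ) : ℕ :=
  Nat.card {f : V → Fin x // ∀ u v, G.Adj u v → f u ≠ f v}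

/-!
Sorting the proper colourings of a graph `G` with `x` colours by their partition into colour
classes gives `χ_G(x) = ∑ₖ S(G, k) x(x-1)⋯(x-k+1)`; since falling factorials are linearly
independent, identities between chromatic polynomials become identities between the `S(G, k)`.
Deletion–contraction on the closing edge of `C_n` gives `χ_{C_n} + χ_{C_{n-1}} = χ_{P_n}`, and
`χ_{P_n}(x) = x (x-1)^{n-1} = ∑ₖ S(n-1, k-1) x(x-1)⋯(x-k+1)` by the classical expansion of
`(x-1)^{n-1}` in falling factorials. The graph `C_3` is complete, so its chromatic polynomial is
the single falling factorial `x(x-1)(x-2)`.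
-/

theorem stirling2_eq_stirlingSecond : stirling2 = Nat.stirlingSecond := by
  funext n k
  induction n generalizing k with
  | zero => cases k <;> rfl
  | succ n ih => cases k <;> simp [stirling2, Nat.stirlingSecond_succ_succ, ih]

namespace Nat

theorem descFactorial_succ_add_mul_descFactorial (x k : ℕ) :
    x.descFactorial (k + 1) + k * x.descFactorial k = x * x.descFactorial k := by
  rcases le_or_gt k x with hk | hk
  · rw [descFactorial_succ, ← add_mul, Nat.sub_add_cancel hk]
  · simp [descFactorial_eq_zero_iff_lt.2 hk]

theorem sum_stirlingSecond_mul_descFactorial {n N : ℕ} (hN : n < N) (x : ℕ) :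
    ∑ k ∈ range N, stirlingSecond n k * x.descFactorial k = x ^ n := by
  induction n generalizing N with
  | zero =>
    rw [sum_eq_single_of_mem 0 (mem_range.2 hN) fun k _ hk =>
      by rw [stirlingSecond_eq_zero_of_lt (pos_of_ne_zero hk), zero_mul]]
    simp
  | succ n ih =>
    obtain ⟨M, rfl⟩ : ∃ M, N = M + 1 := ⟨N - 1, by omega⟩
    have hM : stirlingSecond n M = 0 := stirlingSecond_eq_zero_of_lt (by omega)
    calc ∑ k ∈ range (M + 1), stirlingSecond (n + 1) k * x.descFactorial k
        = ∑ k ∈ range M, ((k + 1) * stirlingSecond n (k + 1) * x.descFactorial (k + 1)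
            + stirlingSecond n k * x.descFactorial (k + 1)) := by
          simp only [sum_range_succ', stirlingSecond_succ_succ, stirlingSecond_succ_zero, add_mul,
            zero_mul, add_zero]
      _ = ∑ k ∈ range (M + 1), k * stirlingSecond n k * x.descFactorial k
            + ∑ k ∈ range M, stirlingSecond n k * x.descFactorial (k + 1) := by
          rw [sum_add_distrib, sum_range_succ' (fun k => k * _ * _)]
          ring
      _ = ∑ k ∈ range M, stirlingSecond n k * (x * x.descFactorial k) := by
          rw [sum_range_succ, hM, mul_zero, zero_mul, add_zero, ← sum_add_distrib]
          refine sum_congr rfl fun k _ => ?_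
          rw [← descFactorial_succ_add_mul_descFactorial]
          ring
      _ = x ^ (n + 1) := by
          simp_rw [mul_left_comm _ x, ← mul_sum, ih (by omega : n < M), pow_succ']

theorem eq_of_sum_mul_descFactorial_eq {N : ℕ} {a b : ℕ → ℕ}
    (h : ∀ x : ℕ, ∑ k ∈ range N, a k * x.descFactorial k =
      ∑ k ∈ range N, b k * x.descFactorial k) :
    ∀ k < N, a k = b k := by
  intro k
  induction k using Nat.strong_induction_on with
  | _ k ih =>
    intro hk
    -- at `x = k` the terms with index above `k` vanish
    have truncate : ∀ c : ℕ → ℕ, ∑ j ∈ range N, c j * k.descFactorial j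
        = ∑ j ∈ range k, c j * k.descFactorial j + c k * k ! := by
      intro c
      rw [← descFactorial_self, ← sum_range_succ]
      refine (sum_subset (range_subset_range.2 hk) fun j _ hj => ?_).symm
      rw [descFactorial_eq_zero_iff_lt.2 (by simpa using hj), mul_zero]
    have hlower :
        ∑ j ∈ range k, a j * k.descFactorial j = ∑ j ∈ range k, b j * k.descFactorial j :=
      sum_congr rfl fun j hj => by rw [ih j (mem_range.1 hj) ((mem_range.1 hj).trans hk)]
    have hk' := h k
    rw [truncate, truncate, hlower, add_left_cancel_iff] at hk'
    exact mul_right_cancel₀ (factorial_ne_zero k) hk'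

end Nat

section Counting

variable {α : Type*}

theorem Fin.forall_snoc_castSucc_ne_succ_iff {n : ℕ} (g : Fin (n + 1) → α) (c : α) :
    (∀ i : Fin (n + 1), (Fin.snoc g c : Fin (n + 2) → α) i.castSucc ≠
      (Fin.snoc g c : Fin (n + 2) → α) i.succ) ↔
      (∀ i : Fin n, g i.castSucc ≠ g i.succ) ∧ g (Fin.last n) ≠ c := by
  simp only [Fin.forall_fin_succ', Fin.succ_castSucc, Fin.snoc_castSucc, Fin.succ_last,
    Fin.snoc_last]

theorem Nat.card_subtype_ne [Finite α] (a : α) : Nat.card {c // a ≠ c} = Nat.card α - 1 := by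
  have := Fintype.ofFinite α
  classical
  simp [Nat.card_eq_fintype_card, Fintype.card_subtype_compl]

theorem Nat.card_subtype_and_add_card_subtype_and_not [Finite α] (p q : α → Prop) :
    Nat.card {a // p a ∧ q a} + Nat.card {a // p a ∧ ¬q a} = Nat.card {a // p a} := by
  classical
  rw [← Nat.card_sum]
  exact Nat.card_congr <| (Equiv.sumCongr (Equiv.subtypeSubtypeEquivSubtypeInter p q).symm
    (Equiv.subtypeSubtypeEquivSubtypeInter p (¬q ·)).symm).trans (Equiv.sumCompl _)

end Counting

namespace Finpartition

variable {V : Type*} [Fintype V] [DecidableEq V] (P : Finpartition (univ : Finset V))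

def partOf (v : V) : P.parts := ⟨P.part v, P.part_mem.2 (mem_univ v)⟩

theorem partOf_surjective : Function.Surjective P.partOf := by
  rintro ⟨p, hp⟩
  obtain ⟨v, -, rfl⟩ := P.part_surjOn hp
  exact ⟨v, rfl⟩

theorem partOf_eq_partOf_iff {u v : V} : P.partOf u = P.partOf v ↔ u ∈ P.part v := by
  rw [partOf, partOf, Subtype.mk.injEq, P.mem_part_iff_part_eq_part (mem_univ u) (mem_univ v)]

theorem ext_partOf {P Q : Finpartition (univ : Finset V)}
    (h : ∀ u v, P.partOf u = P.partOf v ↔ Q.partOf u = Q.partOf v) : P = Q := by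
  have hpart : P.part = Q.part := by
    ext v u
    rw [← partOf_eq_partOf_iff, ← partOf_eq_partOf_iff, h]
  ext p
  constructor <;> intro hp
  · obtain ⟨v, -, rfl⟩ := P.part_surjOn hp
    exact hpart ▸ Q.part_mem.2 (mem_univ v)
  · obtain ⟨v, -, rfl⟩ := Q.part_surjOn hp
    exact hpart ▸ P.part_mem.2 (mem_univ v)

theorem exists_embedding_comp_partOf {α : Type*} {f : V → α}
    (hf : ∀ u v, P.partOf u = P.partOf v ↔ f u = f v) : ∃ ι : P.parts ↪ α, ι ∘ P.partOf = f := by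
  set s := Function.surjInv P.partOf_surjective
  have hs : ∀ p, P.partOf (s p) = p := Function.surjInv_eq P.partOf_surjective
  refine ⟨⟨f ∘ s, fun p q hpq => ?_⟩, funext fun v => (hf _ _).1 (hs _)⟩
  rw [← hs p, ← hs q]
  exact (hf _ _).2 hpq

end Finpartition

namespace SimpleGraph

variable {α V : Type*}

def IsProperColoring (G : SimpleGraph V) (f : V → α) : Prop := ∀ u v, G.Adj u v → f u ≠ f v

theorem isProperColoring_top_iff {f : V → α} :
    IsProperColoring ⊤ f ↔ Function.Injective f := by
  simp only [IsProperColoring, top_adj, Function.Injective]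
  exact forall₂_congr fun u v => not_imp_not

theorem isProperColoring_pathGraph_iff {n : ℕ} {f : Fin (n + 1) → α} :
    IsProperColoring (pathGraph (n + 1)) f ↔ ∀ i : Fin n, f i.castSucc ≠ f i.succ := by
  refine ⟨fun h i => h _ _ (pathGraph_adj.2 (Or.inl (by simp))), fun h u v huv => ?_⟩
  rcases pathGraph_adj.1 huv with huv | huv
  · obtain ⟨i, rfl, rfl⟩ : ∃ i : Fin n, i.castSucc = u ∧ i.succ = v :=
      ⟨⟨u, by omega⟩, rfl, Fin.ext (by simp [huv])⟩
    exact h i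
  · obtain ⟨i, rfl, rfl⟩ : ∃ i : Fin n, i.succ = u ∧ i.castSucc = v :=
      ⟨⟨v, by omega⟩, Fin.ext (by simp [huv]), rfl⟩
    exact (h i).symm

theorem isProperColoring_cycleGraph_iff {n : ℕ} {f : Fin (n + 2) → α} :
    IsProperColoring (cycleGraph (n + 2)) f ↔
      IsProperColoring (pathGraph (n + 2)) f ∧ f (Fin.last (n + 1)) ≠ f 0 := by
  have : IsProperColoring (cycleGraph (n + 2)) f ↔ ∀ u, f u ≠ f (u + 1) := by
    refine ⟨fun h u => h u (u + 1) (cycleGraph_adj.2 (Or.inr (add_sub_cancel_left u 1))),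
      fun h u v huv => ?_⟩
    rcases cycleGraph_adj.1 huv with huv | huv
    · rw [sub_eq_iff_eq_add'.1 huv]
      exact (h v).symm
    · rw [sub_eq_iff_eq_add'.1 huv]
      exact h u
  rw [this, Fin.forall_fin_succ', Fin.last_add_one, isProperColoring_pathGraph_iff]
  simp only [Fin.coeSucc_eq_succ]

def pathGraphColoringSnocEquiv (n : ℕ) :
    {f : Fin (n + 2) → α // IsProperColoring (pathGraph (n + 2)) f} ≃
      Σ g : {g : Fin (n + 1) → α // IsProperColoring (pathGraph (n + 1)) g},
        {c // g.1 (Fin.last n) ≠ c} where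
  toFun f :=
    have h := (Fin.forall_snoc_castSucc_ne_succ_iff (Fin.init f.1) (f.1 (Fin.last _))).1
      ((Fin.snoc_init_self f.1).symm ▸ isProperColoring_pathGraph_iff.1 f.2)
    ⟨⟨Fin.init f.1, isProperColoring_pathGraph_iff.2 h.1⟩, ⟨f.1 (Fin.last _), h.2⟩⟩
  invFun p := ⟨Fin.snoc p.1.1 p.2.1, isProperColoring_pathGraph_iff.2 <|
    (Fin.forall_snoc_castSucc_ne_succ_iff _ _).2 ⟨isProperColoring_pathGraph_iff.1 p.1.2, p.2.2⟩⟩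
  left_inv f := Subtype.ext (Fin.snoc_init_self f.1)
  right_inv _ := Sigma.subtype_ext (Subtype.ext (Fin.init_snoc (α := fun _ => α) _ _))
    (Fin.snoc_last (α := fun _ => α) _ _)

theorem card_isProperColoring_pathGraph [Finite α] (n : ℕ) :
    Nat.card {f : Fin (n + 1) → α // IsProperColoring (pathGraph (n + 1)) f} =
      Nat.card α * (Nat.card α - 1) ^ n := by
  induction n with
  | zero => simp [isProperColoring_pathGraph_iff, Nat.card_fun]
  | succ n ih =>
    have := Fintype.ofFinite α
    classical
    rw [Nat.card_congr (pathGraphColoringSnocEquiv n), Nat.card_sigma]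
    simp only [Nat.card_subtype_ne, sum_const, card_univ, smul_eq_mul, ← Nat.card_eq_fintype_card,
      ih]
    ring

def pathGraphColoringEndsEqEquiv (n : ℕ) :
    {f : Fin (n + 3) → α // IsProperColoring (pathGraph (n + 3)) f ∧ f (Fin.last _) = f 0} ≃
      {g : Fin (n + 2) → α // IsProperColoring (cycleGraph (n + 2)) g} where
  toFun f := ⟨Fin.init f.1, by
    obtain ⟨f, hf, hlast⟩ := f
    rw [isProperColoring_pathGraph_iff, ← Fin.snoc_init_self f,
      Fin.forall_snoc_castSucc_ne_succ_iff, hlast] at hf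
    exact isProperColoring_cycleGraph_iff.2 ⟨isProperColoring_pathGraph_iff.2 hf.1, hf.2⟩⟩
  invFun g := ⟨Fin.snoc g.1 (g.1 0), by
    obtain ⟨hpath, hlast⟩ := isProperColoring_cycleGraph_iff.1 g.2
    refine ⟨isProperColoring_pathGraph_iff.2 ?_, by simp⟩
    exact (Fin.forall_snoc_castSucc_ne_succ_iff _ _).2
      ⟨isProperColoring_pathGraph_iff.1 hpath, hlast⟩⟩
  left_inv f := by
    obtain ⟨f, -, hlast⟩ := f
    exact Subtype.ext
      ((congrArg (Fin.snoc (Fin.init f)) hlast.symm).trans (Fin.snoc_init_self f))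
  right_inv g := Subtype.ext (Fin.init_snoc (α := fun _ => α) _ _)

variable [Fintype V] [DecidableEq V] (G : SimpleGraph V)

def IsIndepPartition (P : Finpartition (univ : Finset V)) : Prop :=
  ∀ p ∈ P.parts, ∀ u ∈ p, ∀ v ∈ p, ¬ G.Adj u v

variable {G} in
theorem isIndepPartition_iff_partOf_ne {P : Finpartition (univ : Finset V)} :
    G.IsIndepPartition P ↔ ∀ u v, G.Adj u v → P.partOf u ≠ P.partOf v := by
  simp only [IsIndepPartition, ne_eq, P.partOf_eq_partOf_iff]
  constructor
  · intro h u v huv hu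
    exact h _ (P.part_mem.2 (mem_univ v)) u hu v (P.mem_part_self.2 (mem_univ v)) huv
  · intro h p hp u hu v hv huv
    exact h u v huv (P.part_eq_of_mem hp hv ▸ hu)

variable (α) in
noncomputable def sigmaEmbeddingEquivProperColoring :
    (Σ P : {P // G.IsIndepPartition P}, P.1.parts ↪ α) ≃ {f : V → α // G.IsProperColoring f} := by
  refine Equiv.ofBijective (fun q => ⟨q.2 ∘ q.1.1.partOf, fun u v huv => ?_⟩) ⟨?_, ?_⟩
  · exact q.2.injective.ne (isIndepPartition_iff_partOf_ne.1 q.1.2 u v huv)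
  · rintro ⟨⟨P, hP⟩, ι⟩ ⟨⟨Q, hQ⟩, κ⟩ h
    have hfun : ι ∘ P.partOf = κ ∘ Q.partOf := congrArg Subtype.val h
    obtain rfl : P = Q := Finpartition.ext_partOf fun u v => by
      rw [← ι.injective.eq_iff, ← κ.injective.eq_iff]
      exact Iff.of_eq (congrArg₂ (· = ·) (congrFun hfun u) (congrFun hfun v))
    obtain rfl : ι = κ := DFunLike.coe_injective (P.partOf_surjective.injective_comp_right hfun)
    rfl
  · rintro ⟨f, hf⟩
    classical
    let P := Finpartition.ofSetoid (Setoid.ker f)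
    have hP : ∀ u v, P.partOf u = P.partOf v ↔ f u = f v := fun u v => by
      rw [P.partOf_eq_partOf_iff, Finpartition.mem_part_ofSetoid_iff_rel]
      exact eq_comm
    obtain ⟨ι, hι⟩ := P.exists_embedding_comp_partOf hP
    refine ⟨⟨⟨P, isIndepPartition_iff_partOf_ne.2 fun u v huv h => hf u v huv ((hP u v).1 h)⟩, ι⟩,
      Subtype.ext hι⟩

end SimpleGraph

theorem chromaticCount_top {V : Type} [Fintype V] (x : ℕ) :
    chromaticCount (⊤ : SimpleGraph V) x = x.descFactorial (Fintype.card V) := by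
  classical
  refine (Nat.card_congr ((Equiv.subtypeEquivRight fun f => isProperColoring_top_iff).trans
    (Equiv.subtypeInjectiveEquivEmbedding V (Fin x)))).trans ?_
  rw [Nat.card_eq_fintype_card, Fintype.card_embedding_eq, Fintype.card_fin]

theorem chromaticCount_pathGraph (n x : ℕ) :
    chromaticCount (pathGraph (n + 1)) x = x * (x - 1) ^ n :=
  (card_isProperColoring_pathGraph n).trans (by rw [Nat.card_fin])

theorem chromaticCount_cycleGraph_add_chromaticCount_cycleGraph (n x : ℕ) :
    chromaticCount (cycleGraph (n + 3)) x + chromaticCount (cycleGraph (n + 2)) x =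
      chromaticCount (pathGraph (n + 3)) x := by
  have hdelete : chromaticCount (cycleGraph (n + 3)) x = Nat.card {f : Fin (n + 3) → Fin x //
      IsProperColoring (pathGraph (n + 3)) f ∧ ¬f (Fin.last _) = f 0} :=
    Nat.card_congr (Equiv.subtypeEquivRight fun _ => isProperColoring_cycleGraph_iff)
  have hcontract : chromaticCount (cycleGraph (n + 2)) x = Nat.card {f : Fin (n + 3) → Fin x //
      IsProperColoring (pathGraph (n + 3)) f ∧ f (Fin.last _) = f 0} :=
    (Nat.card_congr (pathGraphColoringEndsEqEquiv n)).symm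
  rw [hdelete, hcontract, add_comm]
  exact Nat.card_subtype_and_add_card_subtype_and_not _ _

section ChromaticExpansion

variable {V : Type} [Fintype V] [DecidableEq V] (G : SimpleGraph V)

theorem chromaticCount_eq_sum_graphStirling_mul_descFactorial {N : ℕ}
    (hN : Fintype.card V < N) (x : ℕ) :
    chromaticCount G x = ∑ k ∈ range N, graphStirling G k * x.descFactorial k := by
  classical
  refine (Nat.card_congr (G.sigmaEmbeddingEquivProperColoring (Fin x)).symm).trans ?_
  rw [Nat.card_sigma]
  have hcard : ∀ P : {P // G.IsIndepPartition P},
      Nat.card (P.1.parts ↪ Fin x) = x.descFactorial #P.1.parts := fun P => by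
    rw [Nat.card_eq_fintype_card, Fintype.card_embedding_eq, Fintype.card_fin, Fintype.card_coe]
  have hStirling : ∀ k, graphStirling G k = #{P | G.IsIndepPartition P ∧ #P.parts = k} := by
    intro k
    rw [graphStirling, Nat.card_eq_fintype_card, Fintype.card_subtype]
    simp only [IsIndepPartition, and_comm]
  simp only [hcard, hStirling]
  rw [← Finset.sum_subtype (univ.filter (IsIndepPartition G)) (by simp)
    (fun P => x.descFactorial #P.parts), ← sum_fiberwise_of_maps_to (g := fun P => #P.parts)
    (t := range N) fun P _ => mem_range.2 (P.card_parts_le_card.trans_lt (by simpa using hN))]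
  refine sum_congr rfl fun k _ => ?_
  rw [filter_filter, sum_congr rfl fun P hP => by rw [(mem_filter.1 hP).2.2], sum_const,
    smul_eq_mul]

end ChromaticExpansion

theorem graphStirling_top {V : Type} [Fintype V] [DecidableEq V] (k : ℕ) :
    graphStirling (⊤ : SimpleGraph V) k = if k = Fintype.card V then 1 else 0 := by
  refine Nat.eq_of_sum_mul_descFactorial_eq (N := Fintype.card V + k + 1)
    (a := graphStirling ⊤) (b := fun j => if j = Fintype.card V then 1 else 0) (fun x => ?_) k
    (by omega)
  rw [← chromaticCount_eq_sum_graphStirling_mul_descFactorial _ (by omega), chromaticCount_top]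
  simp [ite_mul]

theorem graphStirling_pathGraph (n k : ℕ) :
    graphStirling (pathGraph (n + 2)) k = stirling2 (n + 1) (k - 1) := by
  refine Nat.eq_of_sum_mul_descFactorial_eq (N := n + k + 3) (a := graphStirling (pathGraph _))
    (b := fun j => stirling2 (n + 1) (j - 1)) (fun x => ?_) k (by omega)
  have hshift : ∀ j, x.descFactorial (j + 1) = x * (x - 1).descFactorial j := by
    intro j
    cases x with
    | zero => simp
    | succ y => simpa using Nat.succ_descFactorial_succ y j
  rw [← chromaticCount_eq_sum_graphStirling_mul_descFactorial _
      (by rw [Fintype.card_fin]; omega), chromaticCount_pathGraph, stirling2_eq_stirlingSecond, sum_range_succ']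
  simp only [Nat.add_sub_cancel, hshift, mul_left_comm _ x, ← mul_sum,
    Nat.sum_stirlingSecond_mul_descFactorial (by omega : n + 1 < n + k + 2)]
  simp

theorem graphStirling_cycleGraph_add_graphStirling_cycleGraph (n k : ℕ) :
    graphStirling (cycleGraph (n + 3)) k + graphStirling (cycleGraph (n + 2)) k =
      graphStirling (pathGraph (n + 3)) k := by
  refine Nat.eq_of_sum_mul_descFactorial_eq (N := n + k + 4)
    (a := fun j => graphStirling (cycleGraph (n + 3)) j + graphStirling (cycleGraph (n + 2)) j)
    (b := graphStirling (pathGraph _)) (fun x => ?_) k (by omega)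
  simp only [add_mul, sum_add_distrib]
  have hcard : ∀ m ≤ n + 3, Fintype.card (Fin m) < n + k + 4 := fun m hm => by
    rw [Fintype.card_fin]
    omega
  rw [← chromaticCount_eq_sum_graphStirling_mul_descFactorial _ (hcard _ le_rfl),
    ← chromaticCount_eq_sum_graphStirling_mul_descFactorial _ (hcard _ (by omega)),
    ← chromaticCount_eq_sum_graphStirling_mul_descFactorial _ (hcard _ le_rfl),
    chromaticCount_cycleGraph_add_chromaticCount_cycleGraph]

theorem cycle_graphStirling_recurrence :
    (∀ n : ℕ, 4 ≤ n → ∀ k : ℕ,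
      (graphStirling (SimpleGraph.cycleGraph n) k : ℤ) =
        (stirling2 (n - 1) (k - 1) : ℤ) - (graphStirling (SimpleGraph.cycleGraph (n - 1)) k : ℤ))
    ∧ graphStirling (SimpleGraph.cycleGraph 3) 3 = 1
    ∧ ∀ k : ℕ, k ≠ 3 → graphStirling (SimpleGraph.cycleGraph 3) k = 0 := by
  refine ⟨fun n hn k => ?_, ?_, fun k hk => ?_⟩
  · obtain ⟨m, rfl⟩ : ∃ m, n = m + 4 := ⟨n - 4, by omega⟩
    have h : graphStirling (cycleGraph (m + 4)) k + graphStirling (cycleGraph (m + 3)) k =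
        stirling2 (m + 3) (k - 1) :=
      (graphStirling_cycleGraph_add_graphStirling_cycleGraph (m + 1) k).trans
        (graphStirling_pathGraph (m + 2) k)
    rw [show m + 4 - 1 = m + 3 from rfl, ← h]
    push_cast
    ring
  · rw [cycleGraph_three_eq_top, graphStirling_top]
    simp
  · rw [cycleGraph_three_eq_top, graphStirling_top, if_neg (by simpa using hk)]
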